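/- arXiv:2311.10649 — 2 statements merged into one kernel-verified Lean document; each statement's English description precedes it below -/
import Mathlib

section
/- Let d ≥ 1 and let Φ⁺(d) be the d ⊗ d maximally entangled state on (Fin d) × (Fin d). Then the rescaled matrix Φ⁺(d)/d belongs to PPT_2(A:B), where A = B = Fin d. -/
/-! The matrix is `c • P` with `c = 1/d²` and `P = ∑ᵢⱼ |ii⟩⟨jj|`, whose partial transpose is the
swap operator `F`. As a self-adjoint involution, `F` satisfies `-1 ⪯ F ⪯ 1`, so `ω = c • 1`
dominates `± c • F`, and `ω^{T_B} = ω` has trace norm `c d² = 1`. -/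

open Matrix
open scoped ComplexOrder

/-- Total positive semidefinite square root: the PSD square root of `M` if `M` is PSD,
and junk value `0` otherwise. -/
noncomputable def msqrt {n : Type*} [Fintype n] [DecidableEq n]
    (M : Matrix n n ℂ) : Matrix n n ℂ :=
  letI := Classical.dec M.PosSemidef
  if h : M.PosSemidef then
    h.1.eigenvectorUnitary.1 * diagonal ((↑) ∘ (√·) ∘ h.1.eigenvalues) *
      (star h.1.eigenvectorUnitary : Matrix n n ℂ)
  else 0

/-- The trace norm `‖M‖₁ = tr √(Mᴴ M)` of a complex matrix, as a real number. -/
noncomputable def traceNorm {n : Type*} [Fintype n] [DecidableEq n]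
    (M : Matrix n n ℂ) : ℝ :=
  (msqrt (Mᴴ * M)).trace.re

/-- The partial transpose over the second party `B`:
`M^{T_B}((a,b),(a',b')) = M((a,b'),(a',b))`. -/
def ptB {A B : Type*} (M : Matrix (A × B) (A × B) ℂ) : Matrix (A × B) (A × B) ℂ :=
  fun x y => M (x.1, y.2) (y.1, x.2)

/-- Uhlmann fidelity `F(ρ,σ) = (tr √(√σ ρ √σ))²` between positive semidefinite matrices. -/
noncomputable def fidelity {n : Type*} [Fintype n] [DecidableEq n]
    (ρ σ : Matrix n n ℂ) : ℝ :=
  ((msqrt (msqrt σ * ρ * msqrt σ)).trace.re) ^ 2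

/-- The set `PPT₂(A:B)`: positive semidefinite `σ` such that there exists `ω` with
`−ω ⪯ σ^{T_B} ⪯ ω` and `‖ω^{T_B}‖₁ ≤ 1`. -/
def PPT2set {A B : Type*} [Fintype A] [Fintype B] [DecidableEq A] [DecidableEq B] :
    Set (Matrix (A × B) (A × B) ℂ) :=
  {σ | σ.PosSemidef ∧ ∃ ω : Matrix (A × B) (A × B) ℂ,
    (ω - ptB σ).PosSemidef ∧ (ω + ptB σ).PosSemidef ∧ traceNorm (ptB ω) ≤ 1}

/-- The `d ⊗ d` maximally entangled state `Φ⁺(d)`: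
`Φ⁺(d)((i,k),(j,l)) = 1/d` if `i = k` and `j = l`, and `0` otherwise. -/
noncomputable def MES (d : ℕ) : Matrix (Fin d × Fin d) (Fin d × Fin d) ℂ :=
  fun x y => if x.1 = x.2 ∧ y.1 = y.2 then ((d : ℂ))⁻¹ else 0

section

variable {n : Type*} [Fintype n] [DecidableEq n]

theorem Matrix.IsHermitian.eigenvalues_ofReal_smul_one {c : ℝ}
    (h : ((c : ℂ) • (1 : Matrix n n ℂ)).IsHermitian) (i : n) : h.eigenvalues i = c := by
  have hdiag := congrFun₂ h.conjStarAlgAut_star_eigenvectorUnitary i i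
  rw [map_smul, map_one] at hdiag
  simpa using hdiag.symm

theorem msqrt_ofReal_smul_one {c : ℝ} (hc : 0 ≤ c) :
    msqrt ((c : ℂ) • (1 : Matrix n n ℂ)) = ((√c : ℝ) : ℂ) • 1 := by
  have hpsd : ((c : ℂ) • (1 : Matrix n n ℂ)).PosSemidef :=
    PosSemidef.one.smul (Complex.zero_le_real.mpr hc)
  rw [msqrt, dif_pos hpsd]
  have hconst : ((↑) ∘ (√·) ∘ hpsd.1.eigenvalues : n → ℂ) = fun _ => ((√c : ℝ) : ℂ) := by
    funext i
    simp [hpsd.1.eigenvalues_ofReal_smul_one]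
  rw [hconst, ← smul_one_eq_diagonal, mul_smul_comm, mul_one, smul_mul_assoc]
  simp

theorem traceNorm_ofReal_smul_one {c : ℝ} (hc : 0 ≤ c) :
    traceNorm ((c : ℂ) • (1 : Matrix n n ℂ)) = c * Fintype.card n := by
  have hsq : ((c : ℂ) • (1 : Matrix n n ℂ))ᴴ * ((c : ℂ) • 1) = ((c ^ 2 : ℝ) : ℂ) • 1 := by
    rw [conjTranspose_smul, conjTranspose_one, smul_mul_smul_comm, one_mul]
    simp [sq]
  rw [traceNorm, hsq, msqrt_ofReal_smul_one (sq_nonneg c), Real.sqrt_sq hc]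
  simp

theorem Matrix.PosSemidef.one_add_of_involution {𝕜 : Type*} [RCLike 𝕜] {S : Matrix n n 𝕜}
    (hS : Sᴴ = S) (hS2 : S * S = 1) : (1 + S).PosSemidef := by
  -- `(1 + S)² = 2 (1 + S)`, so `1 + S` is half a Gram matrix.
  have hgram : 1 + S = (2⁻¹ : ℝ) • ((1 + S)ᴴ * (1 + S)) := by
    rw [conjTranspose_add, conjTranspose_one, hS, mul_add, add_mul, add_mul, hS2, one_mul, mul_one,
      one_mul]
    module
  rw [hgram]
  exact (posSemidef_conjTranspose_mul_self _).smul (by norm_num)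

end

section

variable {A B : Type*}

@[simp]
theorem ptB_smul (c : ℂ) (M : Matrix (A × B) (A × B) ℂ) : ptB (c • M) = c • ptB M := rfl

@[simp]
theorem ptB_one [DecidableEq A] [DecidableEq B] : ptB (1 : Matrix (A × B) (A × B) ℂ) = 1 := by
  ext ⟨a, b⟩ ⟨a', b'⟩
  by_cases ha : a = a' <;> by_cases hb : b = b' <;> simp [ptB, one_apply, ha, hb, eq_comm]

variable (B) [DecidableEq B]

def unnormalizedMES : Matrix (B × B) (B × B) ℂ :=
  of fun x y => if x.1 = x.2 ∧ y.1 = y.2 then 1 else 0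

abbrev swapMatrix : Matrix (B × B) (B × B) ℂ :=
  Equiv.Perm.permMatrix ℂ (Equiv.prodComm B B)

theorem ptB_unnormalizedMES : ptB (unnormalizedMES B) = swapMatrix B := by
  ext ⟨a, b⟩ ⟨a', b'⟩
  simp [ptB, unnormalizedMES, PEquiv.toMatrix_apply, eq_comm, and_comm]

theorem swapMatrix_conjTranspose : (swapMatrix B)ᴴ = swapMatrix B := by
  rw [conjTranspose_permMatrix]
  rfl

variable [Fintype B]

theorem swapMatrix_mul_self : swapMatrix B * swapMatrix B = 1 := by
  rw [← permMatrix_mul]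
  convert permMatrix_one
  ext <;> rfl

theorem posSemidef_unnormalizedMES : (unnormalizedMES B).PosSemidef := by
  let v : B × B → ℂ := fun x => if x.1 = x.2 then 1 else 0
  have hv : unnormalizedMES B = vecMulVec v (star v) := by
    ext x y
    by_cases hx : x.1 = x.2 <;> by_cases hy : y.1 = y.2 <;>
      simp [unnormalizedMES, vecMulVec_apply, v, hx, hy]
  rw [hv]
  exact posSemidef_vecMulVec_self_star v

theorem ofReal_smul_unnormalizedMES_mem_PPT2set {c : ℝ} (hc : 0 ≤ c)
    (hcard : c * Fintype.card B ^ 2 ≤ 1) : (c : ℂ) • unnormalizedMES B ∈ PPT2set := by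
  have hc' : (0 : ℂ) ≤ c := Complex.zero_le_real.mpr hc
  refine ⟨(posSemidef_unnormalizedMES B).smul hc', (c : ℂ) • 1, ?_, ?_, ?_⟩
  · rw [ptB_smul, ptB_unnormalizedMES, ← smul_sub, sub_eq_add_neg]
    refine (PosSemidef.one_add_of_involution ?_ ?_).smul hc'
    · rw [conjTranspose_neg, swapMatrix_conjTranspose]
    · rw [neg_mul_neg, swapMatrix_mul_self]
  · rw [ptB_smul, ptB_unnormalizedMES, ← smul_add]
    exact (PosSemidef.one_add_of_involution (swapMatrix_conjTranspose B)
      (swapMatrix_mul_self B)).smul hc'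
  · rw [ptB_smul, ptB_one, traceNorm_ofReal_smul_one hc, Fintype.card_prod, ← sq]
    exact_mod_cast hcard

end

theorem mes_div_d_mem_PPT2_general (d : ℕ) :
    ((d : ℂ))⁻¹ • MES d ∈ PPT2set (A := Fin d) (B := Fin d) := by
  have hMES : ((d : ℂ))⁻¹ • MES d = (((d : ℝ) ^ 2)⁻¹ : ℝ) • unnormalizedMES (Fin d) := by
    ext x y
    simp [MES, unnormalizedMES, sq]
  rw [hMES]
  refine ofReal_smul_unnormalizedMES_mem_PPT2set (Fin d) (by positivity) ?_
  rw [Fintype.card_fin]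
  exact inv_mul_le_one_of_le₀ le_rfl (by positivity)

theorem mes_div_d_mem_PPT2 (d : ℕ) (hd : 1 ≤ d) :
    ((d : ℂ))⁻¹ • MES d ∈ PPT2set (A := Fin d) (B := Fin d) :=
  mes_div_d_mem_PPT2_general d
end

section
/- Let A and B be finite types and let k ≥ 2 be an integer. Then PPT#_{k+1}(A:B) ⊆ PPT#_k(A:B), and PPT#_k(A:B) ⊆ PPT'(A:B), where PPT'(A:B) is the Rains set. -/
/-!
Along a `PPT#` chain the trace norms `‖ω_i^{T_B}‖₁` increase: `ω_{i+1} ⪰ |ω_i^{T_B}|` gives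
`‖ω_i^{T_B}‖₁ = tr |ω_i^{T_B}| ≤ tr ω_{i+1}`, the partial transpose preserves the trace, and
`tr H ≤ tr |H| = ‖H‖₁` for `H = ω_{i+1}^{T_B}`, which is Hermitian because
`ω_{i+1} ⪰ |ω_i^{T_B}| ⪰ 0`. Hence the bound `‖ω_k^{T_B}‖₁ ≤ 1` propagates down to `ω_1`, and a
chain of length `k + 1` truncates to one of length `k`.
-/

open Matrix
open scoped ComplexOrder

/-- The matrix absolute value `|M| = √(Mᴴ M)`. -/
noncomputable def matAbs {n : Type*} [Fintype n] [DecidableEq n]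
    (M : Matrix n n ℂ) : Matrix n n ℂ :=
  msqrt (Mᴴ * M)

/-- The set `PPT#_k(A:B)`: positive semidefinite `ω₁` such that there exist `ω₂, …, ω_k` with
`|ω_i^{T_B}| ⪯ ω_{i+1}` for all `1 ≤ i ≤ k−1` and `‖ω_k^{T_B}‖₁ ≤ 1`. -/
def PPThashSet {A B : Type*} [Fintype A] [Fintype B] [DecidableEq A] [DecidableEq B]
    (k : ℕ) : Set (Matrix (A × B) (A × B) ℂ) :=
  {σ | σ.PosSemidef ∧ ∃ ω : ℕ → Matrix (A × B) (A × B) ℂ, ω 1 = σ ∧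
    (∀ i, 1 ≤ i → i ≤ k - 1 → (ω (i + 1) - matAbs (ptB (ω i))).PosSemidef) ∧
    traceNorm (ptB (ω k)) ≤ 1}

/-- The Rains set `PPT'(A:B)`: positive semidefinite `σ` with `‖σ^{T_B}‖₁ ≤ 1`. -/
def RainsSet {A B : Type*} [Fintype A] [Fintype B] [DecidableEq A] [DecidableEq B] :
    Set (Matrix (A × B) (A × B) ℂ) :=
  {σ | σ.PosSemidef ∧ traceNorm (ptB σ) ≤ 1}

open scoped MatrixOrder

section MatAbs

variable {n : Type*} [Fintype n] [DecidableEq n]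

lemma msqrt_eq_cfcSqrt {M : Matrix n n ℂ} (hM : M.PosSemidef) : msqrt M = CFC.sqrt M := by
  rw [msqrt, dif_pos hM, CFC.sqrt_eq_cfc, cfc_nnreal_eq_real _ M, hM.1.cfc_eq, IsHermitian.cfc,
    Unitary.conjStarAlgAut_apply]
  congr 3
  ext i
  simp [hM.eigenvalues_nonneg i]

lemma matAbs_eq_cfcAbs (M : Matrix n n ℂ) : matAbs M = CFC.abs M :=
  msqrt_eq_cfcSqrt (posSemidef_conjTranspose_mul_self M)

lemma matAbs_posSemidef (M : Matrix n n ℂ) : (matAbs M).PosSemidef := by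
  rw [matAbs_eq_cfcAbs]
  exact (CFC.abs_nonneg M).posSemidef

lemma Matrix.IsHermitian.le_matAbs {M : Matrix n n ℂ} (hM : M.IsHermitian) : M ≤ matAbs M := by
  rw [matAbs_eq_cfcAbs, ← sub_nonneg, CFC.abs_sub_self M hM.isSelfAdjoint]
  exact smul_nonneg zero_le_two (CFC.negPart_nonneg M)

lemma Matrix.IsHermitian.re_trace_le_traceNorm {M : Matrix n n ℂ} (hM : M.IsHermitian) :
    M.trace.re ≤ traceNorm M := by
  have h := (Matrix.nonneg_iff_posSemidef.mp (sub_nonneg.mpr hM.le_matAbs)).trace_nonneg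
  rw [trace_sub, sub_nonneg] at h
  exact (Complex.le_def.mp h).1

lemma traceNorm_le_re_trace_of_posSemidef_sub_matAbs {M N : Matrix n n ℂ}
    (h : (N - matAbs M).PosSemidef) : traceNorm M ≤ N.trace.re := by
  have h' := h.trace_nonneg
  rw [trace_sub, sub_nonneg] at h'
  exact (Complex.le_def.mp h').1

lemma posSemidef_of_posSemidef_sub_matAbs {M N : Matrix n n ℂ}
    (h : (N - matAbs M).PosSemidef) : N.PosSemidef := by
  simpa using h.add (matAbs_posSemidef M)

end MatAbs

section PartialTranspose

variable {A B : Type*}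

@[simp]
lemma trace_ptB [Fintype A] [Fintype B] (M : Matrix (A × B) (A × B) ℂ) :
    (ptB M).trace = M.trace :=
  rfl

lemma Matrix.IsHermitian.ptB {M : Matrix (A × B) (A × B) ℂ} (hM : M.IsHermitian) :
    (ptB M).IsHermitian := by
  ext x y
  simpa [conjTranspose_apply, _root_.ptB] using congrFun (congrFun hM (x.1, y.2)) (y.1, x.2)

variable [Fintype A] [Fintype B] [DecidableEq A] [DecidableEq B]

lemma traceNorm_ptB_le_of_posSemidef_sub_matAbs {ω ω' : Matrix (A × B) (A × B) ℂ}
    (h : (ω' - matAbs (ptB ω)).PosSemidef) : traceNorm (ptB ω) ≤ traceNorm (ptB ω') := by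
  calc traceNorm (ptB ω) ≤ ω'.trace.re := traceNorm_le_re_trace_of_posSemidef_sub_matAbs h
    _ = (ptB ω').trace.re := by rw [trace_ptB]
    _ ≤ traceNorm (ptB ω') :=
      (posSemidef_of_posSemidef_sub_matAbs h).isHermitian.ptB.re_trace_le_traceNorm

lemma monotoneOn_traceNorm_ptB_of_chain {ω : ℕ → Matrix (A × B) (A × B) ℂ} {k : ℕ}
    (hchain : ∀ i, 1 ≤ i → i ≤ k - 1 → (ω (i + 1) - matAbs (ptB (ω i))).PosSemidef) :
    MonotoneOn (fun i ↦ traceNorm (ptB (ω i))) (Set.Icc 1 k) :=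
  monotoneOn_of_le_succ Set.ordConnected_Icc fun i _ hi hsi ↦
    traceNorm_ptB_le_of_posSemidef_sub_matAbs <|
      hchain i hi.1 (by simp only [Set.mem_Icc, Order.succ_eq_add_one] at hsi; omega)

end PartialTranspose

theorem PPThash_hierarchy {A B : Type*} [Fintype A] [Fintype B] [DecidableEq A] [DecidableEq B]
    (k : ℕ) (hk : 2 ≤ k) :
    (PPThashSet (A := A) (B := B) (k + 1) ⊆ PPThashSet k) ∧
      (PPThashSet (A := A) (B := B) k ⊆ RainsSet) := by
  constructor
  · rintro σ ⟨hσ, ω, hω₁, hchain, hlast⟩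
    refine ⟨hσ, ω, hω₁, fun i hi hik ↦ hchain i hi (by omega), ?_⟩
    exact (traceNorm_ptB_le_of_posSemidef_sub_matAbs (hchain k (by omega) (by omega))).trans hlast
  · rintro σ ⟨hσ, ω, rfl, hchain, hlast⟩
    have hmono := monotoneOn_traceNorm_ptB_of_chain hchain
    exact ⟨hσ, (hmono ⟨le_rfl, by omega⟩ ⟨by omega, le_rfl⟩ (by omega)).trans hlast⟩
end
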